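/- Let (X,d,μ) be a metric measure space with μ doubling, without atoms, with balls of finite positive measure, and μ(X) = ∞. Let d̃(x,y) = inf{μ(B) : B a closed ball containing x and y} and let B̃(x,r) = {y : d̃(x,y) ≤ r} be the quasi-balls. Then μ(B̃(x,r)) ≍ r uniformly: there exist c, C > 0 with c·r ≤ μ(B̃(x,r)) ≤ C·r for all x ∈ X and r > 0. -/

import Mathlib

open Real MeasureTheory Metric

/-- The infimum of the measures of closed balls containing both `x` and `y`. -/
noncomputable def qdist {X : Type*} [MetricSpace X] [MeasurableSpace X]
    (μ : Measure X) (x y : X) : ENNReal :=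
  ⨅ (z : X) (r : ℝ) (_ : x ∈ Metric.closedBall z r ∧ y ∈ Metric.closedBall z r),
    μ (Metric.closedBall z r)

/-!
Since `μ` has no atoms and infinite mass, `t ↦ μ (closedBall x t)` climbs from `0` to `∞`, so for
every finite level `A > 0` there is a radius `s > 0` with `μ (B(x, s)) ≤ A < μ (B(x, 2s))`.
The ball `B(x, s)` lies in the quasi-ball of level `A`, which by doubling (constant `K`) gives
`A / K ≤ μ(B̃)`.
Conversely, any ball containing `x` and `y` has, up to the factor `K²`, at least the measure of
`B(x, d(x, y))`; so the quasi-ball of level `A` lies in `B(x, 2s)` for the radius `s` chosen at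
level `K² A`, and its measure is at most `K³ A`.
-/

theorem Monotone.exists_le_lt_two_mul {α : Type*} [LinearOrder α] {f : ℝ → α} (hf : Monotone f)
    {A : α} {t₁ t₂ : ℝ} (ht₁ : 0 < t₁) (hle : f t₁ ≤ A) (hlt : A < f t₂) :
    ∃ s > 0, f s ≤ A ∧ A < f (2 * s) := by
  set S := {t | f t ≤ A}
  have hbdd : BddAbove S := ⟨t₂, fun t ht => le_of_lt (hf.reflect_lt (ht.trans_lt hlt))⟩
  have hT : 0 < sSup S := ht₁.trans_le (le_csSup hbdd hle)
  obtain ⟨s, hsS, hs⟩ := exists_lt_of_lt_csSup ⟨t₁, hle⟩ (half_lt_self hT)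
  have h2s : 2 * s ∉ S := fun h => by linarith [le_csSup hbdd h]
  exact ⟨s, by linarith, hsS, not_le.1 h2s⟩

section

variable {X : Type*} [MetricSpace X] [MeasurableSpace X] {μ : Measure X}

variable (μ) in
theorem monotone_measure_closedBall (x : X) :
    Monotone fun r => μ (closedBall x r) :=
  fun _ _ h => measure_mono (closedBall_subset_closedBall h)

theorem exists_measure_closedBall_lt [BorelSpace X] {x : X} (hfin : μ (closedBall x 1) ≠ ⊤)
    (hx : μ {x} = 0) {ε : ENNReal} (hε : 0 < ε) :
    ∃ t > 0, μ (closedBall x t) < ε := by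
  have h := tendsto_measure_biInter_gt (μ := μ) (s := closedBall x) (a := 0)
    (fun _ _ => measurableSet_closedBall.nullMeasurableSet)
    (fun _ _ _ h => closedBall_subset_closedBall h) ⟨1, one_pos, hfin⟩
  rw [biInter_gt_closedBall, closedBall_zero, hx] at h
  exact ((h.eventually (gt_mem_nhds hε)).and self_mem_nhdsWithin).exists.imp
    fun t ht => ⟨ht.2, ht.1⟩

theorem exists_lt_measure_closedBall (hμ : μ Set.univ = ⊤) (x : X) {A : ENNReal} (hA : A < ⊤) :
    ∃ t, A < μ (closedBall x t) := by
  have h := tendsto_measure_iUnion_atTop (μ := μ)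
    (fun _ _ h => closedBall_subset_closedBall (x := x) h)
  rw [Set.eq_univ_of_forall fun y => Set.mem_iUnion.2 ⟨dist y x, mem_closedBall.2 le_rfl⟩,
    hμ] at h
  exact (h.eventually (lt_mem_nhds hA)).exists

def IsDoublingWith (μ : Measure X) (K : ENNReal) : Prop :=
  ∀ (x : X) (r : ℝ), 0 ≤ r → μ (closedBall x (2 * r)) ≤ K * μ (closedBall x r)

theorem isDoublingWith_add_one {C₀ : ENNReal}
    (h : ∀ (x : X) (r : ℝ), 0 < r → μ (closedBall x (2 * r)) ≤ C₀ * μ (closedBall x r)) :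
    IsDoublingWith μ (C₀ + 1) := by
  intro x r hr
  rcases hr.eq_or_lt with rfl | hr
  · rw [mul_zero]
    exact le_mul_of_one_le_left zero_le le_add_self
  · exact (h x r hr).trans (mul_le_mul_left le_self_add _)

theorem measure_closedBall_dist_le {K : ENNReal} (hK : IsDoublingWith μ K) {x y z : X} {s : ℝ}
    (hx : x ∈ closedBall z s) (hy : y ∈ closedBall z s) :
    μ (closedBall x (dist y x)) ≤ K ^ 2 * μ (closedBall z s) := by
  have hs : 0 ≤ s := dist_nonneg.trans hx
  have hsub : closedBall x (dist y x) ⊆ closedBall z (2 * (2 * s)) := by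
    intro w hw
    rw [mem_closedBall] at hw hx hy ⊢
    linarith [dist_triangle w x z, dist_triangle y z x, dist_comm x z]
  calc μ (closedBall x (dist y x)) ≤ μ (closedBall z (2 * (2 * s))) := measure_mono hsub
    _ ≤ K * (K * μ (closedBall z s)) :=
      (hK z _ (by positivity)).trans (mul_le_mul_right (hK z s hs) K)
    _ = K ^ 2 * μ (closedBall z s) := by ring

theorem measure_closedBall_dist_le_qdist {K : ENNReal} (hK : IsDoublingWith μ K) (hK₀ : K ≠ 0)
    (hK_top : K ≠ ⊤) (x y : X) :
    μ (closedBall x (dist y x)) ≤ K ^ 2 * qdist μ x y := by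
  simp only [qdist, ENNReal.mul_iInf_of_ne (pow_ne_zero 2 hK₀) (ENNReal.pow_ne_top hK_top)]
  exact le_iInf fun z => le_iInf fun s => le_iInf fun ⟨hx, hy⟩ =>
    measure_closedBall_dist_le hK hx hy

theorem qdist_le_measure_closedBall {x y : X} {s : ℝ} (hy : y ∈ closedBall x s) :
    qdist μ x y ≤ μ (closedBall x s) :=
  iInf₂_le_of_le x s (iInf_le_of_le ⟨mem_closedBall_self (dist_nonneg.trans hy), hy⟩ le_rfl)

theorem exists_measure_closedBall_le_lt_two_mul [BorelSpace X] (hμ : μ Set.univ = ⊤) {x : X}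
    (hfin : μ (closedBall x 1) ≠ ⊤) (hx : μ {x} = 0) {A : ENNReal} (hA₀ : 0 < A) (hA : A < ⊤) :
    ∃ s > 0, μ (closedBall x s) ≤ A ∧ A < μ (closedBall x (2 * s)) := by
  obtain ⟨t₁, ht₁, hle⟩ := exists_measure_closedBall_lt hfin hx hA₀
  obtain ⟨t₂, hlt⟩ := exists_lt_measure_closedBall hμ x hA
  exact (monotone_measure_closedBall μ x).exists_le_lt_two_mul ht₁ hle.le hlt

theorem div_le_measure_qdist_le [BorelSpace X] (hμ : μ Set.univ = ⊤) {K : ENNReal}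
    (hK : IsDoublingWith μ K) {x : X} (hfin : μ (closedBall x 1) ≠ ⊤) (hx : μ {x} = 0)
    {A : ENNReal} (hA₀ : 0 < A) (hA : A < ⊤) :
    A / K ≤ μ {y | qdist μ x y ≤ A} := by
  obtain ⟨s, hs, hle, hlt⟩ := exists_measure_closedBall_le_lt_two_mul hμ hfin hx hA₀ hA
  have hsub : closedBall x s ⊆ {y | qdist μ x y ≤ A} :=
    fun y hy => (qdist_le_measure_closedBall hy).trans hle
  calc A / K ≤ μ (closedBall x s) :=
        ENNReal.div_le_of_le_mul (hlt.le.trans ((hK x s hs.le).trans_eq (mul_comm _ _)))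
    _ ≤ μ {y | qdist μ x y ≤ A} := measure_mono hsub

theorem measure_qdist_le_le [BorelSpace X] (hμ : μ Set.univ = ⊤) {K : ENNReal}
    (hK : IsDoublingWith μ K) (hK₀ : K ≠ 0) (hK_top : K ≠ ⊤) {x : X}
    (hfin : μ (closedBall x 1) ≠ ⊤) (hx : μ {x} = 0) {A : ENNReal} (hA₀ : 0 < A) (hA : A < ⊤) :
    μ {y | qdist μ x y ≤ A} ≤ K ^ 3 * A := by
  obtain ⟨s, hs, hle, hlt⟩ := exists_measure_closedBall_le_lt_two_mul hμ hfin hx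
    (A := K ^ 2 * A) (ENNReal.mul_pos (pow_ne_zero 2 hK₀) hA₀.ne')
    (ENNReal.mul_lt_top (ENNReal.pow_lt_top hK_top.lt_top) hA)
  have hsub : {y | qdist μ x y ≤ A} ⊆ closedBall x (2 * s) := fun y hy =>
    le_of_lt <| (monotone_measure_closedBall μ x).reflect_lt <|
      ((measure_closedBall_dist_le_qdist hK hK₀ hK_top x y).trans
        (mul_le_mul_right hy _)).trans_lt hlt
  calc μ {y | qdist μ x y ≤ A} ≤ μ (closedBall x (2 * s)) := measure_mono hsub
    _ ≤ K * (K ^ 2 * A) := (hK x s hs.le).trans (mul_le_mul_right hle K)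
    _ = K ^ 3 * A := by ring

end

theorem measure_quasi_ball_comparable_radius_general {X : Type*} [MetricSpace X]
    [MeasurableSpace X] [BorelSpace X] (μ : Measure X)
    (hfin : ∀ (x : X) (r : ℝ), μ (Metric.closedBall x r) < ⊤)
    (hatomless : ∀ x : X, μ {x} = 0)
    (hinfinite : μ Set.univ = ⊤)
    (C₀ : ENNReal) (hC₀ : C₀ < ⊤)
    (hdoubling : ∀ (x : X) (r : ℝ), 0 < r →
      μ (Metric.closedBall x (2 * r)) ≤ C₀ * μ (Metric.closedBall x r)) :
    ∃ c > (0:ℝ), ∃ C > (0:ℝ), ∀ x : X, ∀ r : ℝ, 0 < r →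
      ENNReal.ofReal (c * r) ≤ μ {y : X | qdist μ x y ≤ ENNReal.ofReal r} ∧
      μ {y : X | qdist μ x y ≤ ENNReal.ofReal r} ≤ ENNReal.ofReal (C * r) := by
  -- `C₀ + 1` is nonzero and, unlike `C₀`, also bounds the doubling ratio at radius `0`.
  set K := C₀ + 1
  have hK : IsDoublingWith μ K := isDoublingWith_add_one hdoubling
  have hK₀ : K ≠ 0 := (zero_lt_one.trans_le le_add_self).ne'
  have hK_top : K ≠ ⊤ := ENNReal.add_ne_top.2 ⟨hC₀.ne, ENNReal.one_ne_top⟩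
  have hK_pos : 0 < K.toReal := ENNReal.toReal_pos hK₀ hK_top
  refine ⟨K.toReal⁻¹, inv_pos.2 hK_pos, K.toReal ^ 3, pow_pos hK_pos 3, fun x r hr => ?_⟩
  have hr₀ : 0 < ENNReal.ofReal r := ENNReal.ofReal_pos.2 hr
  constructor
  · rw [mul_comm, ENNReal.ofReal_mul hr.le, ENNReal.ofReal_inv_of_pos hK_pos,
      ENNReal.ofReal_toReal hK_top, ← div_eq_mul_inv]
    exact div_le_measure_qdist_le hinfinite hK (hfin x 1).ne (hatomless x) hr₀ ENNReal.ofReal_lt_top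
  · rw [ENNReal.ofReal_mul (by positivity), ENNReal.ofReal_pow hK_pos.le,
      ENNReal.ofReal_toReal hK_top]
    exact measure_qdist_le_le hinfinite hK hK₀ hK_top (hfin x 1).ne (hatomless x) hr₀
      ENNReal.ofReal_lt_top

theorem measure_quasi_ball_comparable_radius {X : Type*} [MetricSpace X]
    [MeasurableSpace X] [BorelSpace X] (μ : Measure X)
    (hpos : ∀ (x : X) (r : ℝ), 0 < r → 0 < μ (Metric.closedBall x r))
    (hfin : ∀ (x : X) (r : ℝ), μ (Metric.closedBall x r) < ⊤)
    (hatomless : ∀ x : X, μ {x} = 0)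
    (hinfinite : μ Set.univ = ⊤)
    (C₀ : ENNReal) (hC₀ : C₀ < ⊤)
    (hdoubling : ∀ (x : X) (r : ℝ), 0 < r →
      μ (Metric.closedBall x (2 * r)) ≤ C₀ * μ (Metric.closedBall x r)) :
    ∃ c > (0:ℝ), ∃ C > (0:ℝ), ∀ x : X, ∀ r : ℝ, 0 < r →
      ENNReal.ofReal (c * r) ≤ μ {y : X | qdist μ x y ≤ ENNReal.ofReal r} ∧
      μ {y : X | qdist μ x y ≤ ENNReal.ofReal r} ≤ ENNReal.ofReal (C * r) :=
  measure_quasi_ball_comparable_radius_general μ hfin hatomless hinfinite C₀ hC₀ hdoubling
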